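/- Let W be a coherent sheaf on a smooth projective curve X of genus g, and let n ≥ 1, d be integers, δ = gcd(n, d) (with δ = n if d = 0), χ = d − n(g − 1). Then χ(E ⊗ W) = 0 for every vector bundle E of rank n and degree d if and only if there exists l ≥ 0 with rk(W) = l·n/δ and deg(W) = −l·χ/δ. -/

import Mathlib

/-!
By Riemann–Roch, `χ(E ⊗ W) = n · deg W + rk W · χ` with `χ = d - n(g - 1)` depends on `E`
only through `(n, d)`, so the vanishing condition is the single linear equation
`n · deg W + rk W · χ = 0`.  Its integer solutions `(rk W, deg W)` are the multiples of
`(n / δ, -χ / δ)` with `δ = gcd(n, χ)`, and `gcd(n, χ) = gcd(n, d)` since `χ ≡ d mod n`.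
-/

/-- An abstract theory of coherent sheaves and vector bundles on a smooth projective
connected curve of genus `g` over an algebraically closed field.  `Bundle` is the type
of vector bundles (with rank `rk` and degree `deg`), `Sheaf` the type of coherent
sheaves (with rank `rkS` and degree `degS`), and `chiTensor E W = χ(E ⊗ W)`, computed
by Riemann–Roch.  On a curve, bundles of every rank `n ≥ 1` and degree `d` exist. -/
structure CurveSheaves where
  Bundle : Type
  rk : Bundle → ℕ
  deg : Bundle → ℤ
  Sheaf : Type
  rkS : Sheaf → ℕ
  degS : Sheaf → ℤ
  g : ℕ
  chiTensor : Bundle → Sheaf → ℤ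
  riemannRoch : ∀ E W, chiTensor E W =
    (rk E : ℤ) * degS W + (rkS W : ℤ) * deg E + (rk E : ℤ) * (rkS W : ℤ) * (1 - (g : ℤ))
  exists_bundle : ∀ (n : ℕ) (d : ℤ), 1 ≤ n → ∃ E, rk E = n ∧ deg E = d

theorem Int.mul_add_mul_eq_zero_iff {a b r s : ℤ} (ha : a ≠ 0) :
    a * s + r * b = 0 ↔ ∃ l : ℤ, r * a.gcd b = l * a ∧ s * a.gcd b = -(l * b) := by
  have hδ : 0 < a.gcd b := Int.gcd_pos_of_ne_zero_left b ha
  obtain ⟨a', b', hcop, ha_eq, hb_eq⟩ := Int.exists_gcd_one hδ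
  set δ : ℤ := (a.gcd b : ℤ)
  have hδ₀ : δ ≠ 0 := by positivity
  constructor
  · intro h
    have ha' : a' ≠ 0 := by rintro rfl; exact ha (by simpa using ha_eq)
    have h' : a' * s + r * b' = 0 := by
      refine (mul_eq_zero.mp ?_).resolve_right hδ₀
      linear_combination h - s * ha_eq - r * hb_eq
    obtain ⟨l, rfl⟩ := (Int.isCoprime_iff_gcd_eq_one.mpr hcop).dvd_of_dvd_mul_right
      (Dvd.intro (-s) (by linarith) : a' ∣ r * b')
    have hs : s = -(l * b') := mul_left_cancel₀ ha' (by linear_combination h')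
    exact ⟨l, by linear_combination -l * ha_eq, by linear_combination δ * hs + l * hb_eq⟩
  · rintro ⟨l, hr, hs⟩
    refine (mul_eq_zero.mp ?_).resolve_right hδ₀
    linear_combination a * hs + b * hr

namespace CurveSheaves

variable (T : CurveSheaves)

theorem chiTensor_eq (E : T.Bundle) (W : T.Sheaf) :
    T.chiTensor E W =
      T.rk E * T.degS W + T.rkS W * (T.deg E - T.rk E * ((T.g : ℤ) - 1)) := by
  rw [T.riemannRoch]; ring

theorem forall_chiTensor_eq_zero_iff {n : ℕ} (d : ℤ) (hn : 1 ≤ n) (W : T.Sheaf) :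
    (∀ E, T.rk E = n → T.deg E = d → T.chiTensor E W = 0) ↔
      n * T.degS W + T.rkS W * (d - n * ((T.g : ℤ) - 1)) = 0 := by
  refine ⟨fun h ↦ ?_, fun h E hrk hdeg ↦ by rw [chiTensor_eq, hrk, hdeg, h]⟩
  obtain ⟨E, hrk, hdeg⟩ := T.exists_bundle n d hn
  simpa only [chiTensor_eq, hrk, hdeg] using h E hrk hdeg

end CurveSheaves

/-- Let `W` be a coherent sheaf on a smooth projective curve of genus
`g`, `n ≥ 1`, `d` integers, `δ = gcd(n, d)` (with `δ = n` if `d = 0`) and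
`χ = d - n(g - 1)`.  Then `χ(E ⊗ W) = 0` for every vector bundle `E` of rank `n` and
degree `d` if and only if there is `l ≥ 0` with `rk W = l·n/δ` and
`deg W = -l·χ/δ`. -/
theorem chi_tensor_vanishing_iff (T : CurveSheaves) (n : ℕ) (d : ℤ) (hn : 1 ≤ n)
    (W : T.Sheaf) :
    (∀ E, T.rk E = n → T.deg E = d → T.chiTensor E W = 0) ↔
      ∃ l : ℕ, (T.rkS W : ℤ) * (Nat.gcd n d.natAbs : ℤ) = (l : ℤ) * (n : ℤ) ∧
        T.degS W * (Nat.gcd n d.natAbs : ℤ) = -(l : ℤ) * (d - (n : ℤ) * ((T.g : ℤ) - 1)) := by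
  have hδ : Nat.gcd n d.natAbs = Int.gcd n (d - n * ((T.g : ℤ) - 1)) :=
    (Int.gcd_sub_mul_left_right (n : ℤ) d _).symm
  rw [T.forall_chiTensor_eq_zero_iff d hn, Int.mul_add_mul_eq_zero_iff (by omega), hδ]
  constructor
  · rintro ⟨l, hr, hs⟩
    have hl : 0 ≤ l := by
      refine nonneg_of_mul_nonneg_left ?_ (by omega : (0 : ℤ) < n)
      rw [← hr]; positivity
    lift l to ℕ using hl
    exact ⟨l, hr, by rw [hs]; ring⟩
  · rintro ⟨l, hr, hs⟩
    exact ⟨l, hr, by rw [hs]; ring⟩
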